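/- Let M be a nonnegative irreducible matrix over a countable index set, λ_M its Perron value, and v a nonzero nonnegative vector with Mv ≤ λv entrywise for some λ > 0. Then λ ≥ λ_M. -/
import Mathlib


open scoped ENNReal

/-- Powers of a nonnegative matrix indexed by a countable set, with entries in `ℝ≥0∞`. -/
noncomputable def matPowE {P : Type*} [DecidableEq P] (M : P → P → ℝ≥0∞) : ℕ → P → P → ℝ≥0∞
  | 0 => fun i j => if i = j then 1 else 0
  | n + 1 => fun i j => ∑' k, M i k * matPowE M n k j

private lemma key_subinv {P : Type*} [DecidableEq P] [Countable P]
    (M : P → P → ℝ≥0∞) (v : P → ℝ≥0∞) (lam : ℝ≥0∞)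
    (hsub : ∀ i, ∑' j, M i j * v j ≤ lam * v i) :
    ∀ n i, ∑' j, matPowE M n i j * v j ≤ lam ^ n * v i := by
  intro n
  induction n with
  | zero =>
    intro i
    have : (∑' j, matPowE M 0 i j * v j) = v i := by
      rw [tsum_eq_single i]
      · simp [matPowE]
      · intro b hb
        simp [matPowE, Ne.symm hb]
    rw [this]
    simp
  | succ n ih =>
    intro i
    have h1 : (∑' j, matPowE M (n + 1) i j * v j)
        = ∑' k, M i k * ∑' j, matPowE M n k j * v j := by
      simp only [matPowE]
      calc (∑' j, (∑' k, M i k * matPowE M n k j) * v j)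
          = ∑' j, ∑' k, M i k * matPowE M n k j * v j := by
            congr 1; ext j; rw [ENNReal.tsum_mul_right]
        _ = ∑' k, ∑' j, M i k * matPowE M n k j * v j := ENNReal.tsum_comm
        _ = ∑' k, M i k * ∑' j, matPowE M n k j * v j := by
            congr 1; ext k; simp_rw [mul_assoc]; rw [ENNReal.tsum_mul_left]
    rw [h1]
    calc (∑' k, M i k * ∑' j, matPowE M n k j * v j)
        ≤ ∑' k, M i k * (lam ^ n * v k) :=
          ENNReal.tsum_le_tsum fun k => mul_le_mul_right (ih k) _
      _ = lam ^ n * ∑' k, M i k * v k := by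
          rw [← ENNReal.tsum_mul_left]; congr 1; ext k; ring
      _ ≤ lam ^ n * (lam * v i) := mul_le_mul_right (hsub i) _
      _ = lam ^ (n + 1) * v i := by ring

theorem stmt11 {P : Type*} [DecidableEq P] [Countable P]
    (M : P → P → ℝ≥0∞)
    (hirr : ∀ i j, ∃ n, matPowE M n i j ≠ 0)
    (v : P → ℝ≥0∞) (hvne : ∃ j, v j ≠ 0) (hvtop : ∀ j, v j ≠ ⊤)
    (lam : ℝ≥0∞) (hlam : 0 < lam)
    (hsub : ∀ i, ∑' j, M i j * v j ≤ lam * v i) :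
    ∀ i : P, (⨆ n : ℕ, matPowE M (n + 1) i i ^ ((1 : ℝ) / ((n : ℝ) + 1))) ≤ lam := by
  intro i
  rcases eq_or_ne lam ⊤ with htop | htop
  · exact htop ▸ le_top
  -- v i is nonzero
  obtain ⟨j, hj⟩ := hvne
  obtain ⟨m, hm⟩ := hirr i j
  have hvi : v i ≠ 0 := by
    intro h0
    have h1 : matPowE M m i j * v j ≤ lam ^ m * v i :=
      le_trans (ENNReal.le_tsum j) (key_subinv M v lam hsub m i)
    rw [h0, mul_zero, le_zero_iff] at h1
    exact (mul_ne_zero hm hj) h1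
  apply iSup_le
  intro n
  have hle : matPowE M (n + 1) i i ≤ lam ^ (n + 1) := by
    have h1 : matPowE M (n + 1) i i * v i ≤ lam ^ (n + 1) * v i :=
      le_trans (ENNReal.le_tsum i) (key_subinv M v lam hsub (n + 1) i)
    exact (ENNReal.mul_le_mul_iff_left hvi (hvtop i)).mp h1
  calc matPowE M (n + 1) i i ^ ((1 : ℝ) / ((n : ℝ) + 1))
      ≤ (lam ^ (n + 1)) ^ ((1 : ℝ) / ((n : ℝ) + 1)) :=
        ENNReal.rpow_le_rpow hle (by positivity)
    _ = lam := by
        rw [← ENNReal.rpow_natCast lam (n + 1), ← ENNReal.rpow_mul]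
        have : ((n + 1 : ℕ) : ℝ) * ((1 : ℝ) / ((n : ℝ) + 1)) = 1 := by
          push_cast
          field_simp
        rw [this, ENNReal.rpow_one]
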